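/- For any consistent, computably axiomatizable formal system S capable of representing elementary arithmetic, there exists a sentence φ such that neither φ nor ¬φ is provable in S; hence S is incomplete. -/

import Mathlib

/-!
Diagonalization: the set of `x` for which `S` refutes `σ (x, x)` ("`φ_x` halts on `x`") is
c.e., so it is the halting set of some machine `e`. For the sentence `σ (e, e)`, representability
then makes "`S` proves `σ (e, e)`" equivalent to "`φ_e` halts on `e`", which by the choice of
`e` is equivalent to "`S` refutes `σ (e, e)`". Consistency rules out both, so neither holds.
-/

open Nat.Partrec (Code)

theorem REPred.comp {α β : Type*} [Primcodable α] [Primcodable β] {p : β → Prop}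
    (hp : REPred p) {f : α → β} (hf : Computable f) : REPred fun a => p (f a) :=
  Partrec.comp hp hf

theorem REPred.exists_code_eval_dom_iff {p : ℕ → Prop} (hp : REPred p) :
    ∃ e : ℕ, ∀ x, ((Denumerable.ofNat Code e).eval x).Dom ↔ p x := by
  obtain ⟨c, hc⟩ := Code.exists_code.1 (Partrec.nat_iff.1 (hp.map (Computable.const 0).to₂))
  refine ⟨Encodable.encode c, fun x => ?_⟩
  rw [Denumerable.ofNat_encode, hc]
  simp [Part.assert]

/-- Gödel's first incompleteness theorem, abstract form.
Let a formal system `S` be given by its provability predicate `Prov` on Gödel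
codes of sentences, with a computable negation map `neg`.  Assume:
* `S` is computably axiomatizable: its set of theorems `Prov` is c.e.;
* `S` is consistent: no sentence and its negation are both provable;
* `S` represents elementary arithmetic, witnessed by a computable map `σ`
  assigning to each machine–input pair `(e, x)` a sentence expressing
  "`φ_e` halts on `x`", which is provable exactly when `φ_e(x)` halts.
Then there is a sentence `φ` such that neither `φ` nor `¬φ` is provable:
`S` is incomplete. -/
theorem goedel_first_incompleteness
    (Prov : ℕ → Prop) (neg : ℕ → ℕ) (σ : ℕ × ℕ → ℕ)
    (hre : REPred Prov) (hneg : Computable neg) (hσ : Computable σ)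
    (hcons : ¬ ∃ φ : ℕ, Prov φ ∧ Prov (neg φ))
    (hrepr : ∀ e x : ℕ,
      ((Denumerable.ofNat Code e).eval x).Dom → Prov (σ (e, x)))
    (hsound : ∀ e x : ℕ,
      Prov (σ (e, x)) → ((Denumerable.ofNat Code e).eval x).Dom) :
    ∃ φ : ℕ, ¬ Prov φ ∧ ¬ Prov (neg φ) := by
  have hrefutable_diag : REPred fun x => Prov (neg (σ (x, x))) :=
    hre.comp (hneg.comp (hσ.comp (Computable.id.pair Computable.id)))
  obtain ⟨e, he⟩ := hrefutable_diag.exists_code_eval_dom_iff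
  have hfix : Prov (σ (e, e)) ↔ Prov (neg (σ (e, e))) :=
    ⟨fun h => (he e).1 (hsound e e h), fun h => hrepr e e ((he e).2 h)⟩
  exact ⟨σ (e, e), fun h => hcons ⟨_, h, hfix.1 h⟩, fun h => hcons ⟨_, hfix.2 h, h⟩⟩
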